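/- Suppose P ∈ ℝ^{n×d} is a stationary point of f, i.e., K*(F(P))P = 0, and suppose F(P) ≠ 0. Then ⟨P̄, K*(F(P))P̄⟩ = −‖F(P)‖² < 0; in particular, the matrix K*(F(P)) is not positive semidefinite. -/

import Mathlib

open Matrix

attribute [local instance] Matrix.frobeniusNormedAddCommGroup Matrix.frobeniusNormedSpace

noncomputable section

/-- The all-ones vector in `ℝⁿ`. -/
def eV (n : ℕ) : Fin n → ℝ := fun _ => 1

/-- The Lindenstrauss operator `K(G) = diag(G)eᵀ + e diag(G)ᵀ − 2G`. -/
def Kop {n : ℕ} (G : Matrix (Fin n) (Fin n) ℝ) : Matrix (Fin n) (Fin n) ℝ :=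
  vecMulVec G.diag (eV n) + vecMulVec (eV n) G.diag - (2 : ℝ) • G

/-- The adjoint `K*(S) = 2(Diag(Se) − S)`. -/
def Kstar {n : ℕ} (S : Matrix (Fin n) (Fin n) ℝ) : Matrix (Fin n) (Fin n) ℝ :=
  (2 : ℝ) • (Matrix.diagonal (S *ᵥ eV n) - S)

/-- `F(P) = K(PPᵀ) − D̄`, where `D̄ = K(P̄P̄ᵀ)`. -/
def Fm {n d : ℕ} (Pbar P : Matrix (Fin n) (Fin d) ℝ) : Matrix (Fin n) (Fin n) ℝ :=
  Kop (P * Pᵀ) - Kop (Pbar * Pbarᵀ)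

/-- `f(P) = (1/2)‖F(P)‖²` with the Frobenius norm. -/
def fObj {n d : ℕ} (Pbar P : Matrix (Fin n) (Fin d) ℝ) : ℝ :=
  (1 / 2) * ‖Fm Pbar P‖ ^ 2

/-- The Hessian quadratic form of `f` at `P`:
`Q_P(ΔP) = ‖K(PΔPᵀ + ΔPPᵀ)‖² + 2⟨F(P), K(ΔPΔPᵀ)⟩`. -/
def QForm {n d : ℕ} (Pbar P ΔP : Matrix (Fin n) (Fin d) ℝ) : ℝ :=
  ‖Kop (P * ΔPᵀ + ΔP * Pᵀ)‖ ^ 2 +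
    2 * Matrix.trace ((Fm Pbar P)ᵀ * Kop (ΔP * ΔPᵀ))

/-- `x` is a local minimizer of `g`: there is `δ > 0` with `g x ≤ g y` whenever `‖y − x‖ ≤ δ`. -/
def IsLocMin {E : Type*} [SeminormedAddCommGroup E] (g : E → ℝ) (x : E) : Prop :=
  ∃ δ > 0, ∀ y, ‖y - x‖ ≤ δ → g x ≤ g y

lemma key {n : ℕ} (S : Matrix (Fin n) (Fin n) ℝ) (hS : Sᵀ = S)
    (A : Matrix (Fin n) (Fin n) ℝ) :
    Matrix.trace (Kstar S * A) = Matrix.trace (S * Kop A) := by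
  have hsym : ∀ i j, S j i = S i j := fun i j => congrFun (congrFun hS i) j
  simp only [Kstar, Kop, Matrix.trace, Matrix.mul_apply, Matrix.diag, Matrix.smul_apply,
    Matrix.sub_apply, Matrix.add_apply, vecMulVec_apply, Matrix.diagonal_apply, mulVec,
    dotProduct, eV, Finset.sum_sub_distrib, Finset.sum_add_distrib, mul_sub, sub_mul,
    mul_one, one_mul, smul_eq_mul, Finset.mul_sum, Finset.sum_mul, Finset.sum_ite_eq,
    Finset.mem_univ, if_true]
  simp only [mul_ite, mul_zero, ite_mul, zero_mul, Finset.sum_ite_eq, Finset.mem_univ, if_true]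
  have h1 : (∑ x, ∑ y, S x y * A y y) = ∑ x, ∑ y, S x y * A x x := by
    rw [Finset.sum_comm]
    exact Finset.sum_congr rfl fun x _ => Finset.sum_congr rfl fun y _ => by rw [hsym]
  have h2 : ∀ x : Fin n, (2 * ∑ z, S x z) * A x x = ∑ z, 2 * (S x z * A x x) := by
    intro x; rw [Finset.mul_sum, Finset.sum_mul]; exact Finset.sum_congr rfl fun z _ => by ring
  simp only [h2, mul_add, Finset.sum_add_distrib]
  rw [show (∑ x, ∑ z, 2 * (S x z * A x x)) = (∑ x, ∑ z, S x z * A z z) + ∑ x, ∑ z, S x z * A x x by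
    rw [h1]; rw [← Finset.sum_add_distrib]
    exact Finset.sum_congr rfl fun x _ => by rw [← Finset.sum_add_distrib]; exact Finset.sum_congr rfl fun z _ => by ring]
  congr 1
  exact Finset.sum_congr rfl fun x _ => Finset.sum_congr rfl fun y _ => by ring

lemma normsq {n : ℕ} (A : Matrix (Fin n) (Fin n) ℝ) :
    ‖A‖ ^ 2 = Matrix.trace (Aᵀ * A) := by
  have h : ‖A‖ = (∑ i, ∑ j, ‖A i j‖ ^ (2:ℝ)) ^ (1/2 : ℝ) := Matrix.frobenius_norm_def A
  have hs : (0:ℝ) ≤ ∑ i, ∑ j, ‖A i j‖ ^ (2:ℝ) :=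
    Finset.sum_nonneg fun i _ => Finset.sum_nonneg fun j _ =>
      Real.rpow_nonneg (norm_nonneg _) _
  rw [h, ← Real.rpow_natCast (_ ^ (1/2:ℝ)) 2, ← Real.rpow_mul hs]
  norm_num
  rw [Matrix.trace]
  simp only [Matrix.diag, Matrix.mul_apply, Matrix.transpose_apply]
  rw [Finset.sum_comm]
  refine Finset.sum_congr rfl fun i _ => Finset.sum_congr rfl fun j _ => ?_
  rw [sq]

lemma kop_sym {n : ℕ} (G : Matrix (Fin n) (Fin n) ℝ) (hG : Gᵀ = G) :
    (Kop G)ᵀ = Kop G := by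
  ext i j
  simp only [Kop, Matrix.transpose_apply, Matrix.sub_apply, Matrix.add_apply,
    vecMulVec_apply, Matrix.smul_apply, Matrix.diag, eV, smul_eq_mul]
  have : G j i = G i j := congrFun (congrFun hG i) j
  rw [this]; ring

lemma fm_sym {n d : ℕ} (Pbar P : Matrix (Fin n) (Fin d) ℝ) :
    (Fm Pbar P)ᵀ = Fm Pbar P := by
  rw [Fm, Matrix.transpose_sub, kop_sym _ (by rw [Matrix.transpose_mul, Matrix.transpose_transpose]),
    kop_sym _ (by rw [Matrix.transpose_mul, Matrix.transpose_transpose])]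


/-- at a nonglobal stationary point `P`,
`⟨P̄, K*(F(P))P̄⟩ = −‖F(P)‖² < 0`, so `K*(F(P))` is not positive semidefinite. -/
theorem stmt_12 {n d : ℕ} (hn : 0 < n) (hd : 0 < d)
    (Pbar : Matrix (Fin n) (Fin d) ℝ) (hPbar : Pbarᵀ *ᵥ eV n = 0)
    (P : Matrix (Fin n) (Fin d) ℝ)
    (hstat : Kstar (Fm Pbar P) * P = 0) (hF : Fm Pbar P ≠ 0) :
    Matrix.trace (Pbarᵀ * (Kstar (Fm Pbar P) * Pbar)) = -‖Fm Pbar P‖ ^ 2 ∧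
    Matrix.trace (Pbarᵀ * (Kstar (Fm Pbar P) * Pbar)) < 0 ∧
    ¬ (Kstar (Fm Pbar P)).PosSemidef := by
  set S := Fm Pbar P with hSdef
  have hS : Sᵀ = S := fm_sym Pbar P
  have hcol : ∀ Q : Matrix (Fin n) (Fin d) ℝ,
      Matrix.trace (Qᵀ * (Kstar S * Q)) = Matrix.trace (S * Kop (Q * Qᵀ)) := by
    intro Q
    rw [Matrix.trace_mul_comm, Matrix.mul_assoc, key S hS]
  have h0 : Matrix.trace (S * Kop (P * Pᵀ)) = 0 := by
    rw [← hcol P, hstat, Matrix.mul_zero, Matrix.trace_zero]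
  have hSS : S * S = S * Kop (P * Pᵀ) - S * Kop (Pbar * Pbarᵀ) := by
    rw [← Matrix.mul_sub]; rfl
  have htr : Matrix.trace (Pbarᵀ * (Kstar S * Pbar)) = -‖S‖ ^ 2 := by
    rw [hcol Pbar, normsq, hS]
    have := congrArg Matrix.trace hSS
    rw [Matrix.trace_sub, h0] at this
    linarith [this]
  have hpos : (0:ℝ) < ‖S‖ ^ 2 := by
    have := norm_pos_iff.mpr hF
    positivity
  refine ⟨htr, by rw [htr]; linarith, ?_⟩
  intro hpsd
  have hnn : 0 ≤ Matrix.trace (Pbarᵀ * (Kstar S * Pbar)) := by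
    rw [Matrix.trace]
    refine Finset.sum_nonneg fun j _ => ?_
    have h2 := hpsd.dotProduct_mulVec_nonneg (fun i => Pbar i j)
    simpa [Matrix.diag, Matrix.mul_apply, Matrix.mulVec, dotProduct,
      Finset.mul_sum, mul_comm] using h2
  rw [htr] at hnn
  linarith
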